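/- arXiv:2308.06116 — 2 statements merged into one kernel-verified Lean document; each statement's English description precedes it below -/
import Mathlib

section
/- (Robbins–Siegmund) Let $\{\mathcal{F}_n\}_{n \geq 1}$ be a filtration and let $\nu_n, a_n, b_n, c_n$ be non-negative random variables adapted to $\mathcal{F}_n$ satisfying $\mathbb{E}[\nu_{n+1} \mid \mathcal{F}_n] \leq \nu_n (1 + a_n) + b_n - c_n$ for all $n$, with $\sum_{n=1}^\infty a_n < \infty$ and $\sum_{n=1}^\infty b_n < \infty$ almost surely. Then almost surely $\nu_n$ converges and $\sum_{n=1}^\infty c_n < \infty$. -/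
/-!
Dividing by `π n = ∏ k < n, (1 + a k)` (`weight a n`) removes the multiplicative drift: with
`b' k = b k / π (k+1)` and `c' k = c k / π (k+1)` (`discounted`), the process
`Y n = ∑ k < n, (b' k - c' k) - ν n / π n` (`process`) is a submartingale bounded above by
`∑ k < n, b' k`.
Freezing `Y` once these partial sums exceed a level `M` gives a submartingale bounded above by
`M`, hence bounded in `L¹`, hence convergent; on `{∑ b < ∞}` the freezing never happens for
large `M`, so `Y` converges there. As `π n` converges to a finite limit, the convergence of
`ν n / π n` and the summability of `c'` transfer back to `ν` and `c`.
-/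

open Filter MeasureTheory Finset Topology

section StoppedSum

variable {y β : ℕ → ℝ} {M : ℝ}

theorem sum_ite_mul_sub_eq_of_sum_le (hβ : ∀ k, 0 ≤ β k) {n : ℕ}
    (h : ∑ k ∈ range n, β k ≤ M) :
    ∑ k ∈ range n, (if ∑ j ∈ range (k + 1), β j ≤ M then 1 else 0) * (y (k + 1) - y k)
      = y n - y 0 := by
  rw [← sum_range_sub]
  refine sum_congr rfl fun k hk => ?_
  have hle : ∑ j ∈ range (k + 1), β j ≤ M :=
    (sum_le_sum_of_subset_of_nonneg (range_subset_range.2 (mem_range.1 hk))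
      fun j _ _ => hβ j).trans h
  rw [if_pos hle, one_mul]

theorem add_sum_ite_mul_sub_le (hβ : ∀ k, 0 ≤ β k) (hyβ : ∀ n, y n ≤ ∑ k ∈ range n, β k)
    (hM : 0 ≤ M) (n : ℕ) :
    y 0 + ∑ k ∈ range n, (if ∑ j ∈ range (k + 1), β j ≤ M then 1 else 0) * (y (k + 1) - y k)
      ≤ M := by
  induction n with
  | zero => simpa using (hyβ 0).trans (by simpa using hM)
  | succ n ih =>
    by_cases h : ∑ j ∈ range (n + 1), β j ≤ M
    · rw [sum_ite_mul_sub_eq_of_sum_le hβ h]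
      linarith [hyβ (n + 1)]
    · rwa [sum_range_succ, if_neg h, zero_mul, add_zero]

end StoppedSum

theorem summable_and_exists_tendsto_of_tendsto_sum_sub {x β γ : ℕ → ℝ} {l : ℝ}
    (hx : ∀ n, 0 ≤ x n) (hγ : ∀ n, 0 ≤ γ n) (hβ : Summable β)
    (h : Tendsto (fun n => ∑ k ∈ range n, (β k - γ k) - x n) atTop (𝓝 l)) :
    Summable γ ∧ ∃ l, Tendsto x atTop (𝓝 l) := by
  have hW : Tendsto (fun n => x n + ∑ k ∈ range n, γ k) atTop (𝓝 (∑' k, β k - l)) :=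
    (hβ.hasSum.tendsto_sum_nat.sub h).congr fun n => by rw [sum_sub_distrib]; ring
  obtain ⟨C, hC⟩ := hW.bddAbove_range
  have hγs : Summable γ :=
    summable_of_sum_range_le hγ fun n => (le_add_of_nonneg_left (hx n)).trans (hC ⟨n, rfl⟩)
  exact ⟨hγs, _, (hW.sub hγs.hasSum.tendsto_sum_nat).congr fun n => add_sub_cancel_right _ _⟩

namespace MeasureTheory

variable {Ω : Type*} {m : MeasurableSpace Ω} {ℱ : Filtration ℕ m} {μ : Measure Ω}

theorem Filtration.measurable_sum_range {g : ℕ → Ω → ℝ} (hg : ∀ k, Measurable[ℱ k] (g k))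
    {k n : ℕ} (hkn : k ≤ n + 1) : Measurable[ℱ n] fun ω => ∑ j ∈ range k, g j ω :=
  Finset.measurable_sum _ fun j hj =>
    (hg j).mono (ℱ.mono (by have := mem_range.1 hj; omega)) le_rfl

theorem Filtration.measurable_prod_range {g : ℕ → Ω → ℝ} (hg : ∀ k, Measurable[ℱ k] (g k))
    {k n : ℕ} (hkn : k ≤ n + 1) : Measurable[ℱ n] fun ω => ∏ j ∈ range k, g j ω :=
  Finset.measurable_prod _ fun j hj =>
    (hg j).mono (ℱ.mono (by have := mem_range.1 hj; omega)) le_rfl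

theorem Submartingale.eLpNorm_one_le_of_le [IsProbabilityMeasure μ] {f : ℕ → Ω → ℝ} {R : ℝ}
    (hf : Submartingale f ℱ μ) (hR : 0 ≤ R) (hfR : ∀ n ω, f n ω ≤ R) (n : ℕ) :
    eLpNorm (f n) 1 μ ≤ ENNReal.ofReal (2 * R - ∫ ω, f 0 ω ∂μ) := by
  have habs : ∀ ω, ‖f n ω‖ ≤ 2 * R - f n ω := fun ω => by
    rw [Real.norm_eq_abs, abs_le]; constructor <;> linarith [hfR n ω]
  have hmono : ∫ ω, f 0 ω ∂μ ≤ ∫ ω, f n ω ∂μ := by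
    simpa using hf.setIntegral_le (Nat.zero_le n) MeasurableSet.univ
  rw [eLpNorm_one_eq_lintegral_enorm, ← ofReal_integral_norm_eq_lintegral_enorm (hf.integrable n)]
  refine ENNReal.ofReal_le_ofReal ?_
  calc ∫ ω, ‖f n ω‖ ∂μ ≤ ∫ ω, (2 * R - f n ω) ∂μ :=
        integral_mono (hf.integrable n).norm ((integrable_const _).sub (hf.integrable n)) habs
    _ = 2 * R - ∫ ω, f n ω ∂μ := by simp [integral_sub (integrable_const _) (hf.integrable n)]
    _ ≤ 2 * R - ∫ ω, f 0 ω ∂μ := by linarith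

theorem Submartingale.ae_exists_tendsto_of_le_sum [IsProbabilityMeasure μ] {Y β : ℕ → Ω → ℝ}
    (hY : Submartingale Y ℱ μ) (hβ : StronglyAdapted ℱ β) (hβ_nonneg : ∀ n ω, 0 ≤ β n ω)
    (hYβ : ∀ n ω, Y n ω ≤ ∑ k ∈ range n, β k ω) :
    ∀ᵐ ω ∂μ, Summable (β · ω) → ∃ l, Tendsto (Y · ω) atTop (𝓝 l) := by
  set ξ : ℕ → ℕ → Ω → ℝ := fun M k ω => if ∑ j ∈ range (k + 1), β j ω ≤ M then 1 else 0
  have hξ : ∀ M, StronglyAdapted ℱ (ξ M) := fun M k =>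
    (Measurable.ite (measurableSet_le
      (Filtration.measurable_sum_range (fun j => (hβ j).measurable) le_rfl) measurable_const)
      measurable_const measurable_const).stronglyMeasurable
  -- `W M` is `Y` frozen from the first time the partial sums of `β` exceed `M`.
  set W : ℕ → ℕ → Ω → ℝ := fun M =>
    (fun _ => Y 0) + fun n => ∑ k ∈ range n, ξ M k * (Y (k + 1) - Y k)
  have hW : ∀ M, Submartingale (W M) ℱ μ := fun M =>
    (martingale_const_fun ℱ μ (hY.stronglyAdapted 0) (hY.integrable 0)).submartingale.add
      (hY.sum_mul_sub (hξ M) (R := 1) (fun k ω => by dsimp [ξ]; split <;> norm_num)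
        fun k ω => by dsimp [ξ]; split <;> norm_num)
  have hW_apply : ∀ M n ω, W M n ω = Y 0 ω + ∑ k ∈ range n,
      (if ∑ j ∈ range (k + 1), β j ω ≤ M then 1 else 0) * (Y (k + 1) ω - Y k ω) := by
    intro M n ω; simp [W, ξ, Finset.sum_apply]
  have hW_le : ∀ (M : ℕ) n ω, W M n ω ≤ M := fun M n ω => by
    rw [hW_apply]
    exact add_sum_ite_mul_sub_le (hβ_nonneg · ω) (hYβ · ω) (Nat.cast_nonneg M) n
  have hconv : ∀ᵐ ω ∂μ, ∀ M, ∃ l, Tendsto (W M · ω) atTop (𝓝 l) :=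
    ae_all_iff.2 fun M => (hW M).exists_ae_tendsto_of_bdd
      ((hW M).eLpNorm_one_le_of_le (Nat.cast_nonneg M) (hW_le M))
  filter_upwards [hconv] with ω hω hsum
  obtain ⟨M, hM⟩ := exists_nat_ge (∑' k, β k ω)
  obtain ⟨l, hl⟩ := hω M
  refine ⟨l, hl.congr fun n => ?_⟩
  rw [hW_apply, sum_ite_mul_sub_eq_of_sum_le (y := (Y · ω)) (hβ_nonneg · ω)
    ((hsum.sum_le_tsum _ fun k _ => hβ_nonneg k ω).trans hM), add_sub_cancel]

end MeasureTheory

namespace RobbinsSiegmund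

variable {Ω : Type*} {a b c ν x : ℕ → Ω → ℝ}

noncomputable def weight (a : ℕ → Ω → ℝ) (n : ℕ) (ω : Ω) : ℝ := ∏ k ∈ range n, (1 + a k ω)

noncomputable def discounted (a x : ℕ → Ω → ℝ) (n : ℕ) (ω : Ω) : ℝ := x n ω / weight a (n + 1) ω

noncomputable def process (a b c ν : ℕ → Ω → ℝ) (n : ℕ) (ω : Ω) : ℝ :=
  ∑ k ∈ range n, (discounted a b k ω - discounted a c k ω) - ν n ω / weight a n ω

theorem one_le_weight (ha : ∀ n ω, 0 ≤ a n ω) (n : ℕ) (ω : Ω) : 1 ≤ weight a n ω :=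
  one_le_prod fun k _ => le_add_of_nonneg_right (ha k ω)

theorem weight_pos (ha : ∀ n ω, 0 ≤ a n ω) (n : ℕ) (ω : Ω) : 0 < weight a n ω :=
  zero_lt_one.trans_le (one_le_weight ha n ω)

theorem tendsto_weight {ω : Ω} (h : Summable (a · ω)) :
    Tendsto (weight a · ω) atTop (𝓝 (∏' k, (1 + a k ω))) :=
  (Real.multipliable_one_add_of_summable h).hasProd.tendsto_prod_nat

theorem discounted_nonneg (ha : ∀ n ω, 0 ≤ a n ω) (hx : ∀ n ω, 0 ≤ x n ω) (n : ℕ) (ω : Ω) :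
    0 ≤ discounted a x n ω :=
  div_nonneg (hx n ω) (weight_pos ha _ ω).le

theorem discounted_le (ha : ∀ n ω, 0 ≤ a n ω) (hx : ∀ n ω, 0 ≤ x n ω) (n : ℕ) (ω : Ω) :
    discounted a x n ω ≤ x n ω :=
  div_le_self (hx n ω) (one_le_weight ha _ ω)

theorem weight_mul_discounted (ha : ∀ n ω, 0 ≤ a n ω) (n : ℕ) (ω : Ω) :
    weight a (n + 1) ω * discounted a x n ω = x n ω :=
  mul_div_cancel₀ _ (weight_pos ha _ ω).ne'

theorem process_le_sum_discounted (ha : ∀ n ω, 0 ≤ a n ω) (hc : ∀ n ω, 0 ≤ c n ω)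
    (hν : ∀ n ω, 0 ≤ ν n ω) (n : ℕ) (ω : Ω) :
    process a b c ν n ω ≤ ∑ k ∈ range n, discounted a b k ω := by
  have hc' : ∑ k ∈ range n, (discounted a b k ω - discounted a c k ω)
      ≤ ∑ k ∈ range n, discounted a b k ω :=
    sum_le_sum fun k _ => sub_le_self _ (discounted_nonneg ha hc k ω)
  have hν' : 0 ≤ ν n ω / weight a n ω := div_nonneg (hν n ω) (weight_pos ha n ω).le
  rw [process]
  linarith

theorem process_eq_sum_range_succ_sub (ha : ∀ n ω, 0 ≤ a n ω) (n : ℕ) (ω : Ω) :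
    process a b c ν n ω = ∑ k ∈ range (n + 1), (discounted a b k ω - discounted a c k ω)
      - (ν n ω * (1 + a n ω) + b n ω - c n ω) / weight a (n + 1) ω := by
  have hw := (weight_pos ha n ω).ne'
  have ha' : 1 + a n ω ≠ 0 := (add_pos_of_pos_of_nonneg one_pos (ha n ω)).ne'
  simp only [process, discounted, sum_range_succ, weight, prod_range_succ] at hw ⊢
  field_simp
  ring

variable {m : MeasurableSpace Ω} {ℱ : Filtration ℕ m} {P : Measure Ω}

theorem measurable_weight (ha : ∀ n, Measurable[ℱ n] (a n)) {k n : ℕ} (hkn : k ≤ n + 1) :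
    Measurable[ℱ n] (weight a k) :=
  Filtration.measurable_prod_range (fun j => measurable_const.add (ha j)) hkn

theorem measurable_discounted (ha : ∀ n, Measurable[ℱ n] (a n))
    (hx : ∀ n, Measurable[ℱ n] (x n)) (n : ℕ) : Measurable[ℱ n] (discounted a x n) :=
  (hx n).div (measurable_weight ha le_rfl)

theorem measurable_process (ha : ∀ n, Measurable[ℱ n] (a n)) (hb : ∀ n, Measurable[ℱ n] (b n))
    (hc : ∀ n, Measurable[ℱ n] (c n)) (hν : ∀ n, Measurable[ℱ n] (ν n)) (n : ℕ) :
    Measurable[ℱ n] (process a b c ν n) :=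
  (Filtration.measurable_sum_range
    (fun k => (measurable_discounted ha hb k).sub (measurable_discounted ha hc k)) n.le_succ).sub
    ((hν n).div (measurable_weight ha n.le_succ))

theorem integrable_div_weight (ha_nonneg : ∀ n ω, 0 ≤ a n ω) (ha : ∀ n, Measurable[ℱ n] (a n))
    {f : Ω → ℝ} (hf : Integrable f P) (k : ℕ) : Integrable (fun ω => f ω / weight a k ω) P := by
  refine hf.mono (hf.aemeasurable.div
    ((measurable_weight ha k.le_succ).mono (ℱ.le k) le_rfl).aemeasurable).aestronglyMeasurable
    (ae_of_all _ fun ω => ?_)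
  rw [norm_div, Real.norm_of_nonneg (weight_pos ha_nonneg k ω).le]
  exact div_le_self (norm_nonneg _) (one_le_weight ha_nonneg k ω)

theorem integrable_process (ha_nonneg : ∀ n ω, 0 ≤ a n ω) (ha : ∀ n, Measurable[ℱ n] (a n))
    (hb : ∀ n, Integrable (b n) P) (hc : ∀ n, Integrable (c n) P) (hν : ∀ n, Integrable (ν n) P)
    (n : ℕ) : Integrable (process a b c ν n) P :=
  (integrable_finsetSum _ fun k _ => (integrable_div_weight ha_nonneg ha (hb k) (k + 1)).sub
    (integrable_div_weight ha_nonneg ha (hc k) (k + 1))).sub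
    (integrable_div_weight ha_nonneg ha (hν n) n)

theorem submartingale_process [IsFiniteMeasure P] (ha_nonneg : ∀ n ω, 0 ≤ a n ω)
    (ha : ∀ n, Measurable[ℱ n] (a n)) (hb : ∀ n, Measurable[ℱ n] (b n))
    (hc : ∀ n, Measurable[ℱ n] (c n)) (hν : ∀ n, Measurable[ℱ n] (ν n))
    (hb_int : ∀ n, Integrable (b n) P) (hc_int : ∀ n, Integrable (c n) P)
    (hν_int : ∀ n, Integrable (ν n) P)
    (hineq : ∀ n, ∀ᵐ ω ∂P, P[ν (n + 1)|ℱ n] ω ≤ ν n ω * (1 + a n ω) + b n ω - c n ω) :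
    Submartingale (process a b c ν) ℱ P := by
  refine submartingale_nat (fun n => (measurable_process ha hb hc hν n).stronglyMeasurable)
    (integrable_process ha_nonneg ha hb_int hc_int hν_int) fun n => ?_
  set S : Ω → ℝ := fun ω => ∑ k ∈ range (n + 1), (discounted a b k ω - discounted a c k ω)
  set w : Ω → ℝ := fun ω => (weight a (n + 1) ω)⁻¹
  have hS_meas : Measurable[ℱ n] S := Filtration.measurable_sum_range
    (fun k => (measurable_discounted ha hb k).sub (measurable_discounted ha hc k)) le_rfl
  have hS_int : Integrable S P := integrable_finsetSum _ fun k _ =>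
    (integrable_div_weight ha_nonneg ha (hb_int k) (k + 1)).sub
      (integrable_div_weight ha_nonneg ha (hc_int k) (k + 1))
  have hνw_int : Integrable (ν (n + 1) * w) P :=
    (integrable_div_weight ha_nonneg ha (hν_int (n + 1)) (n + 1)).congr
      (ae_of_all _ fun ω => div_eq_mul_inv _ _)
  have hsplit : process a b c ν (n + 1) = S - ν (n + 1) * w := by
    ext ω; simp only [process, S, w, Pi.sub_apply, Pi.mul_apply, div_eq_mul_inv]
  have hS : P[S|ℱ n] = S :=
    condExp_of_stronglyMeasurable (ℱ.le n) hS_meas.stronglyMeasurable hS_int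
  have hνw : P[ν (n + 1) * w|ℱ n] =ᵐ[P] P[ν (n + 1)|ℱ n] * w :=
    condExp_mul_of_stronglyMeasurable_right (measurable_weight ha le_rfl).inv.stronglyMeasurable
      hνw_int (hν_int (n + 1))
  filter_upwards [condExp_sub hS_int hνw_int (ℱ n), hνw, hineq n] with ω hsub hmul hle
  rw [hsplit, hsub, Pi.sub_apply, hS, hmul, Pi.mul_apply,
    process_eq_sum_range_succ_sub ha_nonneg, div_eq_mul_inv]
  exact sub_le_sub_left
    (mul_le_mul_of_nonneg_right hle (inv_nonneg.2 (weight_pos ha_nonneg _ ω).le)) _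

end RobbinsSiegmund

open RobbinsSiegmund

theorem stmt_4_general {Ω : Type*} {mΩ : MeasurableSpace Ω} (P : Measure Ω) [IsProbabilityMeasure P]
    (F : ℕ → MeasurableSpace Ω) (hF_mono : Monotone F) (hF_le : ∀ n, F n ≤ mΩ)
    (ν a b c : ℕ → Ω → ℝ)
    (hν_nonneg : ∀ n ω, 0 ≤ ν n ω) (ha_nonneg : ∀ n ω, 0 ≤ a n ω)
    (hb_nonneg : ∀ n ω, 0 ≤ b n ω) (hc_nonneg : ∀ n ω, 0 ≤ c n ω)
    (hν_adapted : ∀ n, Measurable[F n] (ν n)) (ha_adapted : ∀ n, Measurable[F n] (a n))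
    (hb_adapted : ∀ n, Measurable[F n] (b n)) (hc_adapted : ∀ n, Measurable[F n] (c n))
    (hν_int : ∀ n, Integrable (ν n) P)
    (hb_int : ∀ n, Integrable (b n) P) (hc_int : ∀ n, Integrable (c n) P)
    (hineq : ∀ n, ∀ᵐ ω ∂P, (P[ν (n + 1) | F n]) ω ≤ ν n ω * (1 + a n ω) + b n ω - c n ω)
    (ha_sum : ∀ᵐ ω ∂P, Summable fun n => a n ω)
    (hb_sum : ∀ᵐ ω ∂P, Summable fun n => b n ω) :
    ∀ᵐ ω ∂P, (∃ l : ℝ, Tendsto (fun n => ν n ω) atTop (nhds l)) ∧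
      Summable fun n => c n ω := by
  let ℱ : Filtration ℕ mΩ := ⟨F, hF_mono, hF_le⟩
  have hY : Submartingale (process a b c ν) ℱ P :=
    submartingale_process ha_nonneg ha_adapted hb_adapted hc_adapted hν_adapted hb_int hc_int
      hν_int hineq
  filter_upwards [ha_sum, hb_sum, hY.ae_exists_tendsto_of_le_sum
    (fun n => (measurable_discounted (ℱ := ℱ) ha_adapted hb_adapted n).stronglyMeasurable)
    (discounted_nonneg ha_nonneg hb_nonneg)
    (process_le_sum_discounted ha_nonneg hc_nonneg hν_nonneg)]
    with ω haω hbω hYω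
  have hb_sum' : Summable (discounted a b · ω) :=
    hbω.of_nonneg_of_le (discounted_nonneg ha_nonneg hb_nonneg · ω)
      (discounted_le ha_nonneg hb_nonneg · ω)
  obtain ⟨_, hY_lim⟩ := hYω hb_sum'
  obtain ⟨hc_sum, _, hν_lim⟩ := summable_and_exists_tendsto_of_tendsto_sum_sub
    (x := fun n => ν n ω / weight a n ω)
    (fun n => div_nonneg (hν_nonneg n ω) (weight_pos ha_nonneg n ω).le)
    (discounted_nonneg ha_nonneg hc_nonneg · ω) hb_sum' hY_lim
  have hw_lim := tendsto_weight haω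
  obtain ⟨C, hC⟩ := hw_lim.bddAbove_range
  refine ⟨⟨_, (hw_lim.mul hν_lim).congr fun n => mul_div_cancel₀ _ (weight_pos ha_nonneg n ω).ne'⟩,
    hc_sum.mul_left C |>.of_nonneg_of_le (hc_nonneg · ω) fun n => ?_⟩
  rw [← weight_mul_discounted (x := c) ha_nonneg n ω]
  exact mul_le_mul_of_nonneg_right (hC ⟨n + 1, rfl⟩) (discounted_nonneg ha_nonneg hc_nonneg n ω)

/-- Robbins–Siegmund lemma: for non-negative adapted integrable sequences with
`E[ν_{n+1} | F_n] ≤ ν_n (1 + a_n) + b_n - c_n` and `∑ a_n, ∑ b_n < ∞` a.s.,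
the sequence `ν_n` converges a.s. and `∑ c_n < ∞` a.s. -/
theorem stmt_4 {Ω : Type*} {mΩ : MeasurableSpace Ω} (P : Measure Ω) [IsProbabilityMeasure P]
    (F : ℕ → MeasurableSpace Ω) (hF_mono : Monotone F) (hF_le : ∀ n, F n ≤ mΩ)
    (ν a b c : ℕ → Ω → ℝ)
    (hν_nonneg : ∀ n ω, 0 ≤ ν n ω) (ha_nonneg : ∀ n ω, 0 ≤ a n ω)
    (hb_nonneg : ∀ n ω, 0 ≤ b n ω) (hc_nonneg : ∀ n ω, 0 ≤ c n ω)
    (hν_adapted : ∀ n, Measurable[F n] (ν n)) (ha_adapted : ∀ n, Measurable[F n] (a n))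
    (hb_adapted : ∀ n, Measurable[F n] (b n)) (hc_adapted : ∀ n, Measurable[F n] (c n))
    (hν_int : ∀ n, Integrable (ν n) P) (ha_int : ∀ n, Integrable (a n) P)
    (hb_int : ∀ n, Integrable (b n) P) (hc_int : ∀ n, Integrable (c n) P)
    (hineq : ∀ n, ∀ᵐ ω ∂P, (P[ν (n + 1) | F n]) ω ≤ ν n ω * (1 + a n ω) + b n ω - c n ω)
    (ha_sum : ∀ᵐ ω ∂P, Summable fun n => a n ω)
    (hb_sum : ∀ᵐ ω ∂P, Summable fun n => b n ω) :
    ∀ᵐ ω ∂P, (∃ l : ℝ, Tendsto (fun n => ν n ω) atTop (nhds l)) ∧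
      Summable fun n => c n ω :=
  stmt_4_general P F hF_mono hF_le ν a b c hν_nonneg ha_nonneg hb_nonneg hc_nonneg hν_adapted
    ha_adapted hb_adapted hc_adapted hν_int hb_int hc_int hineq ha_sum hb_sum
end

section
/- Let $\{t_n\}$ be a positive sequence with $\sum_{j=1}^\infty \frac{t_j}{\sum_{n=1}^j t_n} = \infty$, and let $\{T_n\}$ be a non-negative sequence such that $\{(\sum_{j=1}^{n-1} t_j) T_n\}$ converges and $\sum_{n=1}^\infty t_n T_n < \infty$. Then $\lim_{n \to \infty} (\sum_{j=1}^{n-1} t_j) T_n = 0$; in particular $T_n = \mathcal{O}\big((\sum_{j=1}^{n-1} t_j)^{-1}\big)$. -/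
/-!
If `(∑_{j<n} t_j) T_n → l > 0`, then eventually `t_n T_n ≥ (l/2) t_n / ∑_{j≤n} t_j`, so the
divergence of `∑ t_j / ∑_{n≤j} t_n` forces `∑ t_n T_n = ∞`. Hence `l = 0`, and a convergent
sequence is bounded.
-/

open Filter Finset Topology

lemma tendsto_sum_Icc_atTop_of_eventually_le {f g : ℕ → ℝ}
    (hf : Tendsto (fun J => ∑ j ∈ Icc 1 J, f j) atTop atTop) (hfg : ∀ᶠ n in atTop, f n ≤ g n) :
    Tendsto (fun J => ∑ j ∈ Icc 1 J, g j) atTop atTop := by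
  obtain ⟨N, hN⟩ := eventually_atTop.1 hfg
  set D : ℕ → ℝ := fun J => ∑ j ∈ Icc 1 J, (g j - f j)
  have hD : ∀ J, N ≤ J → D N ≤ D J := fun J hJ => by
    have hIoc : ∀ K, Icc 1 K = Ioc 0 K := Icc_add_one_left_eq_Ioc 0
    simp only [D, hIoc]
    rw [← sum_Ioc_consecutive _ (Nat.zero_le N) hJ]
    exact le_add_of_nonneg_right (sum_nonneg fun j hj => sub_nonneg.2 (hN j (mem_Ioc.1 hj).1.le))
  refine tendsto_atTop_mono' atTop ?_ (tendsto_atTop_add_const_right _ (D N) hf)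
  filter_upwards [eventually_ge_atTop N] with J hJ
  have hsplit : ∑ j ∈ Icc 1 J, g j = ∑ j ∈ Icc 1 J, f j + D J := by
    simp only [D, sum_sub_distrib, add_sub_cancel]
  linarith [hD J hJ]

section PartialSums

variable {t T : ℕ → ℝ}

lemma sum_Icc_one_pos (ht : ∀ n, 1 ≤ n → 0 < t n) {n : ℕ} (hn : 1 ≤ n) :
    0 < ∑ j ∈ Icc 1 n, t j :=
  sum_pos (fun j hj => ht j (mem_Icc.1 hj).1) ⟨1, mem_Icc.2 ⟨le_rfl, hn⟩⟩

lemma monotone_sum_Icc_one (ht : ∀ n, 1 ≤ n → 0 ≤ t n) :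
    Monotone fun n => ∑ j ∈ Icc 1 n, t j := fun _ _ hmn =>
  sum_le_sum_of_subset_of_nonneg (Icc_subset_Icc_right hmn)
    fun j hj _ => ht j (mem_Icc.1 hj).1

theorem eq_zero_of_tendsto_sum_Icc_mul {l : ℝ} (ht : ∀ n, 1 ≤ n → 0 < t n)
    (hdiv : Tendsto (fun J => ∑ j ∈ Icc 1 J, t j / ∑ n ∈ Icc 1 j, t n) atTop atTop)
    (hT : ∀ n, 1 ≤ n → 0 ≤ T n)
    (hl : Tendsto (fun n => (∑ j ∈ Icc 1 (n - 1), t j) * T n) atTop (𝓝 l))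
    (hsum : BddAbove (Set.range fun J => ∑ n ∈ Icc 1 J, t n * T n)) :
    l = 0 := by
  have hl0 : 0 ≤ l := ge_of_tendsto hl <| (eventually_ge_atTop 1).mono fun n hn =>
    mul_nonneg (sum_nonneg fun j hj => (ht j (mem_Icc.1 hj).1).le) (hT n hn)
  refine (hl0.eq_or_lt.resolve_right fun hlpos => ?_).symm
  have hlarge : ∀ᶠ n in atTop, l / 2 ≤ (∑ j ∈ Icc 1 (n - 1), t j) * T n :=
    hl.eventually (eventually_ge_nhds (half_lt_self hlpos))
  have hcompare : ∀ᶠ n in atTop, l / 2 * (t n / ∑ j ∈ Icc 1 n, t j) ≤ t n * T n := by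
    filter_upwards [hlarge, eventually_ge_atTop 2] with n hn hn2
    have hprev := sum_Icc_one_pos ht (n := n - 1) (by omega)
    have hmono := monotone_sum_Icc_one (fun m hm => (ht m hm).le) (Nat.sub_le n 1)
    have htn := ht n (by omega)
    have hTn := hT n (by omega)
    rw [mul_div_assoc', div_le_iff₀ (hprev.trans_le hmono)]
    nlinarith [mul_le_mul_of_nonneg_left hmono (mul_nonneg htn.le hTn)]
  have hscaled := hdiv.const_mul_atTop (half_pos hlpos)
  simp only [mul_sum] at hscaled
  exact not_bddAbove_of_tendsto_atTop (tendsto_sum_Icc_atTop_of_eventually_le hscaled hcompare) hsum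

end PartialSums

/-- Deterministic core of the rate: if `t` is positive with
`∑_j t_j / (∑_{n=1}^j t_n) = ∞`, `T` is non-negative, `(∑_{j=1}^{n-1} t_j) T_n`
converges and `∑ t_n T_n < ∞`, then `(∑_{j=1}^{n-1} t_j) T_n → 0`; in particular
`T_n = O((∑_{j=1}^{n-1} t_j)⁻¹)`. -/
theorem stmt_7 (t T : ℕ → ℝ)
    (ht : ∀ n, 1 ≤ n → 0 < t n)
    (hdiv : Tendsto
      (fun J => ∑ j ∈ Finset.Icc 1 J, t j / ∑ n ∈ Finset.Icc 1 j, t n) atTop atTop)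
    (hT : ∀ n, 1 ≤ n → 0 ≤ T n)
    (hconv : ∃ l : ℝ, Tendsto (fun n => (∑ j ∈ Finset.Icc 1 (n - 1), t j) * T n)
      atTop (nhds l))
    (hsum : ∃ M : ℝ, ∀ J, ∑ n ∈ Finset.Icc 1 J, t n * T n ≤ M) :
    Tendsto (fun n => (∑ j ∈ Finset.Icc 1 (n - 1), t j) * T n) atTop (nhds 0) ∧
      ∃ C : ℝ, 0 < C ∧ ∀ n, 2 ≤ n → T n ≤ C / ∑ j ∈ Finset.Icc 1 (n - 1), t j := by
  obtain ⟨l, hl⟩ := hconv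
  obtain ⟨M, hM⟩ := hsum
  obtain rfl : l = 0 :=
    eq_zero_of_tendsto_sum_Icc_mul ht hdiv hT hl ⟨M, Set.forall_mem_range.2 hM⟩
  refine ⟨hl, ?_⟩
  obtain ⟨C, hC⟩ := hl.bddAbove_range
  refine ⟨max C 1, zero_lt_one.trans_le (le_max_right C 1), fun n hn => ?_⟩
  rw [le_div_iff₀ (sum_Icc_one_pos ht (by omega)), mul_comm]
  exact (hC ⟨n, rfl⟩).trans (le_max_left C 1)
end
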